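/- arXiv:2312.03092 — 3 statements merged into one kernel-verified Lean document; each statement's English description precedes it below -/
import Mathlib

section
/- Let (G,κ) be a proper edge coloring of a finite simple graph. Then 𝔊_κ is contained in the centralizer of Aut_κ(G) in Sym(V(G)). In particular, if G has at least 3 vertices and 𝔊_κ = Sym(V(G)), then Aut_κ(G) is the trivial group. -/
open scoped Classical

/-
A permutation σ preserving the colored edges conjugates the toggle τ_a into a permutation that
again swaps exactly the endpoints of the edges colored a; since such a permutation is unique,
σ τ_a σ⁻¹ = τ_a. Hence every generator, and so all of 𝔊_κ, commutes with Aut_κ(G). If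
𝔊_κ = Sym(V), then Aut_κ(G) lies in the center of Sym(V), which is trivial once |V| ≥ 3.
-/

/-- A proper edge coloring of a finite simple graph `G` with colors `{1, …, k}`:
it assigns colors in `{1, …, k}` to edges, is surjective onto `{1, …, k}`, and
incident edges receive distinct colors. -/
def IsProperEdgeColoring {V : Type*} (G : SimpleGraph V) (k : ℕ) (κ : Sym2 V → ℕ) : Prop :=
  (∀ e ∈ G.edgeSet, κ e ∈ Finset.Icc 1 k) ∧
  (∀ a ∈ Finset.Icc 1 k, ∃ e ∈ G.edgeSet, κ e = a) ∧
  (∀ u v w : V, G.Adj u v → G.Adj u w → v ≠ w → κ s(u, v) ≠ κ s(u, w))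
/-- `IsToggle G κ a τ` says that the permutation `τ` is the product of the
transpositions `(i j)` over all edges `{i,j}` of `G` colored `a`: it swaps the two
endpoints of every edge colored `a` and fixes all other vertices. -/
def IsToggle {V : Type*} (G : SimpleGraph V) (κ : Sym2 V → ℕ) (a : ℕ) (τ : Equiv.Perm V) : Prop :=
  ∀ v w : V, v ≠ w → (τ v = w ↔ G.Adj v w ∧ κ s(v, w) = a)
/-- The coloring group `𝔊_κ`: the subgroup of `Sym(V)` generated by the
permutations `τ_1, …, τ_k` associated to the colors `1, …, k`. -/
def coloringGroup {V : Type*} (G : SimpleGraph V) (k : ℕ) (κ : Sym2 V → ℕ) :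
    Subgroup (Equiv.Perm V) :=
  Subgroup.closure { τ : Equiv.Perm V | ∃ a : ℕ, 1 ≤ a ∧ a ≤ k ∧ IsToggle G κ a τ }
/-- `IsColorAut G κ σ`: membership in `Aut_κ(G)`, i.e. `{i,j}` is an edge of `G`
colored `a` if and only if `{σ i, σ j}` is an edge of `G` colored `a`. -/
def IsColorAut {V : Type*} (G : SimpleGraph V) (κ : Sym2 V → ℕ) (σ : Equiv.Perm V) : Prop :=
  ∀ i j : V, ∀ a : ℕ,
    (G.Adj i j ∧ κ s(i, j) = a) ↔ (G.Adj (σ i) (σ j) ∧ κ s(σ i, σ j) = a)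


theorem IsToggle.unique {V : Type*} {G : SimpleGraph V} {κ : Sym2 V → ℕ} {a : ℕ}
    {τ τ' : Equiv.Perm V} (h : IsToggle G κ a τ) (h' : IsToggle G κ a τ') : τ = τ' := by
  have apply_eq_of_ne : ∀ {τ τ' : Equiv.Perm V}, IsToggle G κ a τ → IsToggle G κ a τ' →
      ∀ v, τ v ≠ v → τ' v = τ v := fun h h' v hv =>
    (h' v _ (Ne.symm hv)).mpr ((h v _ (Ne.symm hv)).mp rfl)
  ext v
  by_cases hv : τ v = v
  · by_cases hv' : τ' v = v
    · rw [hv, hv']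
    · exact apply_eq_of_ne h' h v hv'
  · exact (apply_eq_of_ne h h' v hv).symm

theorem IsToggle.conj {V : Type*} {G : SimpleGraph V} {κ : Sym2 V → ℕ} {a : ℕ}
    {τ σ : Equiv.Perm V} (hτ : IsToggle G κ a τ) (hσ : IsColorAut G κ σ) :
    IsToggle G κ a (σ * τ * σ⁻¹) := by
  intro v w hvw
  have hσvw : (G.Adj (σ⁻¹ v) (σ⁻¹ w) ∧ κ s(σ⁻¹ v, σ⁻¹ w) = a) ↔ (G.Adj v w ∧ κ s(v, w) = a) := by
    simpa using hσ (σ⁻¹ v) (σ⁻¹ w) a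
  rw [← hσvw, ← hτ _ _ (σ⁻¹.injective.ne hvw), Equiv.Perm.mul_apply, Equiv.Perm.mul_apply,
    ← Equiv.Perm.eq_inv_iff_eq]

theorem IsColorAut.commute_of_isToggle {V : Type*} {G : SimpleGraph V} {κ : Sym2 V → ℕ}
    {a : ℕ} {τ σ : Equiv.Perm V} (hσ : IsColorAut G κ σ) (hτ : IsToggle G κ a τ) :
    Commute σ τ :=
  mul_inv_eq_iff_eq_mul.mp ((hτ.conj hσ).unique hτ)

theorem coloringGroup_le_centralizer {V : Type*} (G : SimpleGraph V) (k : ℕ)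
    (κ : Sym2 V → ℕ) :
    coloringGroup G k κ ≤ Subgroup.centralizer { σ : Equiv.Perm V | IsColorAut G κ σ } := by
  rw [coloringGroup, Subgroup.closure_le]
  rintro τ ⟨a, -, -, hτ⟩ σ hσ
  exact (IsColorAut.commute_of_isToggle hσ hτ).eq

theorem Equiv.Perm.center_eq_bot {α : Type*} [Fintype α] (hα : 3 ≤ Fintype.card α) :
    Subgroup.center (Equiv.Perm α) = ⊥ := by
  refine (Subgroup.eq_bot_iff_forall _).mpr fun σ hσ => ?_
  by_contra hσ1
  obtain ⟨v, hv⟩ : ∃ v, σ v ≠ v := by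
    by_contra! h; exact hσ1 (Equiv.ext h)
  obtain ⟨w, -, hw⟩ : ∃ w ∈ Finset.univ, w ∉ ({v, σ v} : Finset α) :=
    Finset.exists_mem_notMem_of_card_lt_card <| by
      rw [Finset.card_univ]; exact (Finset.card_le_two).trans_lt hα
  obtain ⟨hwv, hwσv⟩ : w ≠ v ∧ w ≠ σ v := by simpa using hw
  -- σ would commute with the transposition (σ v w), which moves σ v but fixes v.
  have hcomm := congrArg (· v) (Subgroup.mem_center_iff.mp hσ (Equiv.swap (σ v) w))
  simp only [Equiv.Perm.mul_apply, Equiv.swap_apply_left,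
    Equiv.swap_apply_of_ne_of_ne (Ne.symm hv) (Ne.symm hwv)] at hcomm
  exact hwσv hcomm

theorem stmt_3_general {V : Type*} [Fintype V] (G : SimpleGraph V) (k : ℕ) (κ : Sym2 V → ℕ) :
    coloringGroup G k κ ≤ Subgroup.centralizer { σ : Equiv.Perm V | IsColorAut G κ σ } ∧
    (3 ≤ Fintype.card V → coloringGroup G k κ = ⊤ →
      ∀ σ : Equiv.Perm V, IsColorAut G κ σ → σ = 1) := by
  refine ⟨coloringGroup_le_centralizer G k κ, fun hcard htop σ hσ => ?_⟩
  have hcenter : σ ∈ Subgroup.center (Equiv.Perm V) :=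
    Subgroup.mem_center_iff.mpr fun π =>
      coloringGroup_le_centralizer G k κ (htop ▸ Subgroup.mem_top π) σ hσ |>.symm
  rwa [Equiv.Perm.center_eq_bot hcard, Subgroup.mem_bot] at hcenter

/-- `𝔊_κ` is contained in the centralizer of `Aut_κ(G)` in `Sym(V)`;
in particular if `|V| ≥ 3` and `𝔊_κ = Sym(V)` then `Aut_κ(G)` is trivial. -/
theorem stmt_3 {V : Type*} [Fintype V] (G : SimpleGraph V) (k : ℕ) (κ : Sym2 V → ℕ)
    (hκ : IsProperEdgeColoring G k κ) :
    coloringGroup G k κ ≤ Subgroup.centralizer { σ : Equiv.Perm V | IsColorAut G κ σ } ∧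
    (3 ≤ Fintype.card V → coloringGroup G k κ = ⊤ →
      ∀ σ : Equiv.Perm V, IsColorAut G κ σ → σ = 1) :=
  stmt_3_general G k κ
end

section
/- Let (G,κ) be a proper edge coloring of a tree that presents a generalized toggle group. Then for every path v_0, v_1, …, v_ℓ in G with ℓ ≥ 2 (distinct vertices with consecutive vertices adjacent), the word κ({v_0,v_1}) κ({v_1,v_2}) ⋯ κ({v_{ℓ−1},v_ℓ}) of edge colors along the path is a toggle word. -/
open scoped Classical

/-- The toggle `τ_e` acting on subsets: `τ_e X = X ∆ {e}` (that is, `X ∪ {e}` if `e ∉ X`,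
and `X \ {e}` if `e ∈ X`) whenever the result lies in `L`, and `τ_e X = X` otherwise. -/
noncomputable def toggle {E : Type*} [DecidableEq E] (L : Set (Finset E)) (e : E)
    (X : Finset E) : Finset E :=
  if symmDiff X {e} ∈ L then symmDiff X {e} else X
/-- `(G,κ)` *presents a generalized toggle group* if there are a finite set `E'`, a
family `L` of subsets of `E'`, a bijection `φ` from the vertices of `G` to `L`, and an
injection `c` from the colors `{1, …, k}` to `E'`, such that `{i,j}` is an edge of `G`
colored `a` iff `φ i ≠ φ j` and `φ j = τ_{c a}(φ i)`. -/
def PresentsToggleGroup {V : Type*} (G : SimpleGraph V) (k : ℕ) (κ : Sym2 V → ℕ) : Prop :=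
  ∃ (E' : Type) (_ : Fintype E') (_ : DecidableEq E') (L : Set (Finset E'))
    (φ : V → Finset E') (c : ℕ → E'),
    (∀ v : V, φ v ∈ L) ∧ (∀ X ∈ L, ∃ v : V, φ v = X) ∧ Function.Injective φ ∧
    Set.InjOn c (Set.Icc 1 k) ∧
    (∀ (i j : V) (a : ℕ), 1 ≤ a → a ≤ k →
      ((G.Adj i j ∧ κ s(i, j) = a) ↔ (φ i ≠ φ j ∧ φ j = toggle L (c a) (φ i))))
/-- A word over the alphabet of colors is a *toggle word* if every contiguous subword of
length at least 2 contains at least two distinct letters each occurring an odd number of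
times in that subword. -/
def IsToggleWord (w : List ℕ) : Prop :=
  ∀ i j : ℕ, 2 ≤ ((w.drop i).take j).length →
    ∃ a b : ℕ, a ≠ b ∧ Odd (((w.drop i).take j).count a) ∧ Odd (((w.drop i).take j).count b)

/-!
Along an edge of colour `a`, a presentation `(φ, c)` forces `φ y = φ x ∆ {c a}`. Along a walk,
`φ` therefore changes by the symmetric difference with the image under `c` of the letters of odd
multiplicity in the colour word. For a path of length at least 2 in a tree this set of letters is
nonempty, since the endpoints are distinct and `φ` is injective, and it is not a single letter
`a`, since then the endpoints would be joined by an edge of colour `a`, a second path between them.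
Contiguous subwords of the colour word of a path are colour words of subpaths.
-/

namespace List

variable {α β : Type*} [DecidableEq α]

def oddLetters (l : List α) : Finset α :=
  l.toFinset.filter fun a => Odd (l.count a)

@[simp]
lemma mem_oddLetters {l : List α} {a : α} : a ∈ l.oddLetters ↔ Odd (l.count a) := by
  simp only [oddLetters, Finset.mem_filter, mem_toFinset, and_iff_right_iff_imp]
  exact fun h => count_pos_iff.mp h.pos

lemma oddLetters_cons (a : α) (l : List α) :
    (a :: l).oddLetters = symmDiff {a} l.oddLetters := by
  ext b
  rw [mem_oddLetters, Finset.mem_symmDiff, mem_oddLetters, Finset.mem_singleton, count_cons]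
  by_cases hb : b = a
  · subst hb
    simp [Nat.odd_add_one]
  · simp [hb, Ne.symm hb]

lemma oddLetters_map [DecidableEq β] {f : α → β} {l : List α} (hf : Set.InjOn f {a | a ∈ l}) :
    (l.map f).oddLetters = l.oddLetters.image f := by
  have hcount : ∀ a ∈ l, (l.map f).count (f a) = l.count a := fun a ha => by
    simpa using Multiset.count_map_eq_count f (l : Multiset α) hf a ha
  ext b
  simp only [mem_oddLetters, Finset.mem_image]
  constructor
  · intro hb
    obtain ⟨a, ha, rfl⟩ := mem_map.mp (count_pos_iff.mp hb.pos)
    exact ⟨a, hcount a ha ▸ hb, rfl⟩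
  · rintro ⟨a, ha, rfl⟩
    rwa [hcount a (count_pos_iff.mp ha.pos)]

end List

lemma toggle_eq_symmDiff_of_mem {E : Type*} [DecidableEq E] {L : Set (Finset E)} {e : E}
    {X : Finset E} (h : symmDiff X {e} ∈ L) : toggle L e X = symmDiff X {e} :=
  if_pos h

lemma toggle_eq_symmDiff_of_ne {E : Type*} [DecidableEq E] {L : Set (Finset E)} {e : E}
    {X : Finset E} (h : toggle L e X ≠ X) : toggle L e X = symmDiff X {e} := by
  unfold toggle at h ⊢
  split_ifs at h ⊢
  · rfl
  · exact absurd rfl h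

namespace SimpleGraph

variable {V : Type*} {G : SimpleGraph V}

lemma Walk.eq_symmDiff_oddLetters {E : Type*} [DecidableEq E] (φ : V → Finset E)
    (ε : Sym2 V → E) (hφ : ∀ ⦃x y⦄, G.Adj x y → φ y = symmDiff (φ x) {ε s(x, y)})
    {x y : V} (q : G.Walk x y) : φ y = symmDiff (φ x) (q.edges.map ε).oddLetters := by
  induction q with
  | nil => exact (symmDiff_bot _).symm
  | cons h q ih =>
    rw [ih, hφ h, edges_cons, List.map_cons, List.oddLetters_cons, symmDiff_assoc]

lemma IsAcyclic.length_eq_one_of_adj (hG : G.IsAcyclic) {x y : V} {q : G.Walk x y}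
    (hq : q.IsPath) (hxy : G.Adj x y) : q.length = 1 :=
  congrArg (fun p : G.Path x y => p.1.length)
    ((hG.subsingleton_path x y).elim ⟨q, hq⟩ (Path.singleton hxy))

theorem one_lt_card_oddLetters_of_isPath {k : ℕ} {κ : Sym2 V → ℕ} (hG : G.IsAcyclic)
    (hκ : ∀ e ∈ G.edgeSet, κ e ∈ Finset.Icc 1 k) (hpres : PresentsToggleGroup G k κ)
    {x y : V} {q : G.Walk x y} (hq : q.IsPath) (hlen : 2 ≤ q.length) :
    1 < (q.edges.map κ).oddLetters.card := by
  obtain ⟨E, _, _, L, φ, c, hφL, -, hφ, hc, hpres⟩ := hpres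
  have hstep : ∀ ⦃x y⦄, G.Adj x y → φ y = symmDiff (φ x) {c (κ s(x, y))} := fun x y hxy => by
    obtain ⟨ha₁, ha₂⟩ := Finset.mem_Icc.mp (hκ _ (G.mem_edgeSet.mpr hxy))
    obtain ⟨hne, htog⟩ := (hpres x y _ ha₁ ha₂).mp ⟨hxy, rfl⟩
    rw [htog, toggle_eq_symmDiff_of_ne (htog ▸ hne.symm)]
  have hletters : ∀ a ∈ q.edges.map κ, a ∈ Set.Icc 1 k := by
    simp only [List.mem_map]
    rintro _ ⟨e, he, rfl⟩
    exact Finset.coe_Icc 1 k ▸ hκ e (q.edges_subset_edgeSet he)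
  have hφxy : φ y = symmDiff (φ x) ((q.edges.map κ).oddLetters.image c) := by
    rw [← List.oddLetters_map (hc.mono hletters), List.map_map]
    exact q.eq_symmDiff_oddLetters φ (c ∘ κ) hstep
  by_contra! hcard
  rcases Nat.le_one_iff_eq_zero_or_eq_one.mp hcard with hzero | hone
  · rw [Finset.card_eq_zero.mp hzero, Finset.image_empty, ← Finset.bot_eq_empty,
      symmDiff_bot] at hφxy
    obtain rfl := hφ hφxy
    rw [Walk.length_eq_zero_iff.mpr (Walk.isPath_iff_nil.mp hq)] at hlen
    omega
  · obtain ⟨a, ha⟩ := Finset.card_eq_one.mp hone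
    have hodd : a ∈ (q.edges.map κ).oddLetters := ha ▸ Finset.mem_singleton_self a
    obtain ⟨ha₁, ha₂⟩ := hletters a (List.count_pos_iff.mp (List.mem_oddLetters.mp hodd).pos)
    rw [ha, Finset.image_singleton] at hφxy
    have hne : φ x ≠ φ y := by
      rw [hφxy, ne_comm, Ne, symmDiff_eq_left]
      exact Finset.singleton_ne_empty _
    have htog : φ y = toggle L (c a) (φ x) := by
      rw [toggle_eq_symmDiff_of_mem (hφxy ▸ hφL y), hφxy]
    have hadj := ((hpres x y a ha₁ ha₂).mpr ⟨hne, htog⟩).1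
    rw [hG.length_eq_one_of_adj hq hadj] at hlen
    omega

end SimpleGraph

theorem stmt_13_general {V : Type*} (G : SimpleGraph V) (hG : G.IsTree)
    (k : ℕ) (κ : Sym2 V → ℕ) (hκ : IsProperEdgeColoring G k κ)
    (hpres : PresentsToggleGroup G k κ)
    (u v : V) (p : G.Walk u v) (hp : p.IsPath) :
    IsToggleWord (p.edges.map κ) := by
  intro i j hij
  have hsub : ((p.edges.map κ).drop i).take j = ((p.drop i).take j).edges.map κ := by
    rw [SimpleGraph.Walk.edges_take, SimpleGraph.Walk.edges_drop, List.map_take, List.map_drop]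
  rw [hsub] at hij ⊢
  obtain ⟨a, ha, b, hb, hab⟩ := Finset.one_lt_card.mp <|
    SimpleGraph.one_lt_card_oddLetters_of_isPath hG.isAcyclic hκ.1 hpres ((hp.drop i).take j)
      (by simpa using hij)
  exact ⟨a, b, hab, List.mem_oddLetters.mp ha, List.mem_oddLetters.mp hb⟩

/-- If a proper edge coloring of a tree presents a generalized toggle
group, then the word of edge colors read along any path of length at least 2 is a toggle
word. -/
theorem stmt_13 {V : Type*} [Fintype V] (G : SimpleGraph V) (hG : G.IsTree)
    (k : ℕ) (κ : Sym2 V → ℕ) (hκ : IsProperEdgeColoring G k κ)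
    (hpres : PresentsToggleGroup G k κ)
    (u v : V) (p : G.Walk u v) (hp : p.IsPath) (hlen : 2 ≤ p.length) :
    IsToggleWord (p.edges.map κ) :=
  stmt_13_general G hG k κ hκ hpres u v p hp
end

section
/- Let (G,κ) be a proper edge coloring of a tree with at least 3 vertices. If (G,κ) presents a generalized toggle group, then the coloring group 𝔊_κ is primitive. -/
/-!
Let `r` be an equivalence relation invariant under `𝔊_κ`. The toggle of the colour of an edge
`y z` fixes every other neighbour `x` of `y`: if `x` had an edge `x w` of that colour, the
presentation (toggles of distinct coordinates commute) would force an edge `w z`, closing the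
4-cycle `x y z w` in the tree. Hence if `r` relates the ends of an edge `x y`, it relates the
ends of every edge at `y`, and by connectivity all vertices. And if `r` relates two distinct
vertices, it relates the ends of some edge: the toggle of the first edge on the geodesic of a
closest related pair at distance `d ≥ 2` moves it to another related pair at distance `d`, one
step further from a fixed vertex, which cannot go on forever in a finite tree.
-/

open scoped Classical

/-- A subgroup `H ≤ Sym(X)` is imprimitive if there is an `H`-invariant partition of `X`
(encoded as an `H`-invariant equivalence relation) having a block of size strictly
between `1` and `|X|`. -/
def Imprimitive {X : Type*} [Fintype X] (H : Subgroup (Equiv.Perm X)) : Prop :=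
  ∃ r : X → X → Prop, Equivalence r ∧
    (∀ g ∈ H, ∀ x y : X, r x y → r (g x) (g y)) ∧
    ∃ x : X, 1 < {y | r x y}.ncard ∧ {y | r x y}.ncard < Fintype.card X
open SimpleGraph

namespace SimpleGraph

variable {V : Type*} {G : SimpleGraph V}

lemma Connected.forall_of_forall_adj {Q : V → Prop} (hG : G.Connected)
    (hQ : ∀ u v, G.Adj u v → Q u → Q v) {a : V} (ha : Q a) (v : V) : Q v := by
  obtain ⟨p⟩ := hG a v
  induction p with
  | nil => exact ha
  | cons h _ ih => exact ih (hQ _ _ h ha)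

lemma Connected.exists_adj_dist_add_one_eq (hG : G.Connected) {o v : V} (hne : o ≠ v) :
    ∃ w, G.Adj v w ∧ G.dist o w + 1 = G.dist o v := by
  obtain ⟨p, hp⟩ := hG.exists_walk_length_eq_dist v o
  have hnil : ¬ p.Nil := fun h => hne h.eq.symm
  refine ⟨p.snd, p.adj_snd hnil, ?_⟩
  have htail : G.dist p.snd o ≤ p.tail.length := dist_le _
  have hlen := p.length_tail_add_one hnil
  have htri : G.dist v o ≤ G.dist v p.snd + G.dist p.snd o := hG.dist_triangle
  rw [dist_eq_one_iff_adj.mpr (p.adj_snd hnil)] at htri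
  rw [SimpleGraph.dist_comm, SimpleGraph.dist_comm (u := o)]
  omega

lemma IsTree.eq_of_adj_of_dist_add_one_eq (hG : G.IsTree) {o v w₁ w₂ : V}
    (h₁ : G.Adj v w₁) (h₂ : G.Adj v w₂)
    (hd₁ : G.dist o w₁ + 1 = G.dist o v) (hd₂ : G.dist o w₂ + 1 = G.dist o v) : w₁ = w₂ := by
  obtain ⟨p, hp, -⟩ := hG.connected.exists_path_of_dist o v
  suffices key : ∀ w, G.Adj v w → G.dist o w + 1 = G.dist o v → w = p.penultimate from
    (key w₁ h₁ hd₁).trans (key w₂ h₂ hd₂).symm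
  intro w hvw hw
  obtain ⟨q, hq, hqlen⟩ := hG.connected.exists_path_of_dist o w
  have hvq : v ∉ q.support := fun hv => by
    have := dist_le (q.takeUntil v hv)
    have := q.length_takeUntil_le_length hv
    omega
  exact hG.isAcyclic.eq_penultimate_of_adj_end hp hvw
    (hG.isAcyclic.mem_support_of_ne_mem_support_of_adj_of_isPath hp hq hvw hvq)

lemma IsTree.eq_of_adj_of_adj (hG : G.IsTree) {x y z w : V} (hxz : x ≠ z)
    (hxy : G.Adj x y) (hyz : G.Adj y z) (hxw : G.Adj x w) (hwz : G.Adj w z) : y = w := by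
  have hy : G.dist x y = 1 := dist_eq_one_iff_adj.mpr hxy
  have hw : G.dist x w = 1 := dist_eq_one_iff_adj.mpr hxw
  have hz : G.dist x z = 2 := by
    rcases hG.dist_eq_dist_add_one_of_adj x hyz with h | h
    · exact absurd (hG.connected.dist_eq_zero_iff.mp (by omega)) hxz
    · omega
  exact hG.eq_of_adj_of_dist_add_one_eq (o := x) hyz.symm hwz.symm (by omega) (by omega)

lemma IsTree.dist_eq_dist_add_one_of_dist_add_dist_eq (hG : G.IsTree) {o b v v' : V}
    (hbv : b ≠ v) (hb : G.dist o b + G.dist b v = G.dist o v) (hvv' : G.Adj v v')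
    (hv' : G.dist b v' = G.dist b v + 1) : G.dist o v' = G.dist o v + 1 := by
  obtain ⟨w, hvw, hw⟩ := hG.connected.exists_adj_dist_add_one_eq hbv
  refine (hG.dist_eq_dist_add_one_of_adj o hvv').resolve_left fun h => ?_
  have hw' : G.dist o w + 1 = G.dist o v := by
    have : G.dist o w ≤ G.dist o b + G.dist b w := hG.connected.dist_triangle
    rcases hG.dist_eq_dist_add_one_of_adj o hvw with h' | h' <;> omega
  obtain rfl := hG.eq_of_adj_of_dist_add_one_eq hvv' hvw h.symm hw'
  omega

end SimpleGraph

namespace IsToggle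

variable {V : Type*} {G : SimpleGraph V} {κ : Sym2 V → ℕ} {a : ℕ} {τ : Equiv.Perm V} {v w : V}

lemma apply_eq (hτ : IsToggle G κ a τ) (h : G.Adj v w) (hc : κ s(v, w) = a) : τ v = w :=
  (hτ v w h.ne).2 ⟨h, hc⟩

lemma adj_apply (hτ : IsToggle G κ a τ) (h : τ v ≠ v) : G.Adj v (τ v) ∧ κ s(v, τ v) = a :=
  (hτ v (τ v) (Ne.symm h)).1 rfl

lemma apply_eq_self (hτ : IsToggle G κ a τ) (h : ∀ w, G.Adj v w → κ s(v, w) ≠ a) : τ v = v := by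
  by_contra hne
  exact h _ (hτ.adj_apply hne).1 (hτ.adj_apply hne).2

end IsToggle

section ColoringGroup

variable {V : Type*} {G : SimpleGraph V} {k : ℕ} {κ : Sym2 V → ℕ}

lemma exists_isToggle
    (hκ : ∀ u v w : V, G.Adj u v → G.Adj u w → v ≠ w → κ s(u, v) ≠ κ s(u, w)) (a : ℕ) :
    ∃ τ : Equiv.Perm V, IsToggle G κ a τ := by
  let P v w := G.Adj v w ∧ κ s(v, w) = a
  have huniq : ∀ v w w', P v w → P v w' → w = w' := fun v w w' h h' =>
    by_contra fun hne => hκ v w w' h.1 h'.1 hne (h.2.trans h'.2.symm)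
  let f : V → V := fun v => if h : ∃ w, P v w then h.choose else v
  have hf : ∀ v w, P v w → f v = w := fun v w h => by
    simp only [f, dif_pos (⟨w, h⟩ : ∃ w, P v w)]
    exact huniq _ _ _ (Exists.choose_spec _) h
  have hf' : ∀ v, (¬ ∃ w, P v w) → f v = v := fun v h => dif_neg h
  have hinv : Function.Involutive f := by
    intro v
    by_cases h : ∃ w, P v w
    · obtain ⟨w, hw⟩ := h
      rw [hf v w hw]
      exact hf w v ⟨hw.1.symm, Sym2.eq_swap ▸ hw.2⟩
    · rw [hf' v h, hf' v h]
  refine ⟨hinv.toPerm f, fun v w hvw => ⟨fun h => ?_, hf v w⟩⟩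
  change f v = w at h
  by_cases hex : ∃ w', P v w'
  · obtain ⟨w', hw'⟩ := hex
    rwa [← h, hf v w' hw']
  · exact absurd ((hf' v hex).symm.trans h) hvw

lemma exists_isToggle_mem_coloringGroup (hκ : IsProperEdgeColoring G k κ) {u v : V}
    (h : G.Adj u v) : ∃ τ ∈ coloringGroup G k κ, IsToggle G κ (κ s(u, v)) τ := by
  obtain ⟨τ, hτ⟩ := exists_isToggle hκ.2.2 (κ s(u, v))
  obtain ⟨h1, h2⟩ := Finset.mem_Icc.mp (hκ.1 s(u, v) h)
  exact ⟨τ, Subgroup.subset_closure ⟨_, h1, h2, hτ⟩, hτ⟩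

end ColoringGroup

namespace PresentsToggleGroup

variable {V : Type*} {G : SimpleGraph V} {k : ℕ} {κ : Sym2 V → ℕ}

lemma adj_of_adj_of_adj (hpres : PresentsToggleGroup G k κ)
    (hcol : ∀ e ∈ G.edgeSet, κ e ∈ Finset.Icc 1 k) {x y z w : V}
    (hxy : G.Adj x y) (hyz : G.Adj y z) (hxw : G.Adj x w) (hc : κ s(x, w) = κ s(y, z)) :
    G.Adj w z := by
  obtain ⟨E, _, _, L, φ, c, hφL, -, -, -, hpres⟩ := hpres
  have hbounds : ∀ {u v}, G.Adj u v → 1 ≤ κ s(u, v) ∧ κ s(u, v) ≤ k := fun h =>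
    Finset.mem_Icc.mp (hcol _ h)
  have hedge : ∀ {u v}, G.Adj u v → φ v = symmDiff (φ u) {c (κ s(u, v))} := by
    intro u v h
    obtain ⟨hne, heq⟩ := (hpres u v _ (hbounds h).1 (hbounds h).2).1 ⟨h, rfl⟩
    unfold toggle at heq
    split_ifs at heq
    · exact heq
    · exact absurd heq.symm hne
  have hφz : φ z = symmDiff (φ w) {c (κ s(x, y))} := by
    rw [hedge hyz, hedge hxy, hedge hxw, hc, symmDiff_right_comm]
  refine ((hpres w z _ (hbounds hxy).1 (hbounds hxy).2).2 ⟨?_, ?_⟩).1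
  · rw [hφz, ne_comm, Ne, symmDiff_eq_left]
    exact Finset.singleton_ne_empty _
  · rw [toggle, if_pos (hφz ▸ hφL z)]
    exact hφz

lemma isToggle_apply_eq_self (hpres : PresentsToggleGroup G k κ) (hG : G.IsTree)
    (hκ : IsProperEdgeColoring G k κ) {x y z : V} {τ : Equiv.Perm V}
    (hτ : IsToggle G κ (κ s(y, z)) τ) (hxy : G.Adj x y) (hyz : G.Adj y z) (hxz : x ≠ z) :
    τ x = x := by
  refine hτ.apply_eq_self fun w hxw hc => ?_
  obtain rfl : y = w :=
    hG.eq_of_adj_of_adj hxz hxy hyz hxw (hpres.adj_of_adj_of_adj hκ.1 hxy hyz hxw hc)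
  exact hκ.2.2 y x z hxy.symm hyz hxz (by rw [Sym2.eq_swap]; exact hc)

end PresentsToggleGroup

section InvariantRelation

variable {V : Type*} {G : SimpleGraph V} {k : ℕ} {κ : Sym2 V → ℕ} {r : V → V → Prop}

lemma rel_of_rel_of_adj_of_adj (hG : G.IsTree) (hκ : IsProperEdgeColoring G k κ)
    (hpres : PresentsToggleGroup G k κ) (hr : Equivalence r)
    (hinv : ∀ g ∈ coloringGroup G k κ, ∀ x y, r x y → r (g x) (g y)) {x y z : V}
    (hxy : G.Adj x y) (hrxy : r x y) (hyz : G.Adj y z) (hzx : z ≠ x) : r y z := by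
  obtain ⟨τ, hτG, hτ⟩ := exists_isToggle_mem_coloringGroup hκ hyz
  have hrxz := hinv τ hτG x y hrxy
  rw [hpres.isToggle_apply_eq_self hG hκ hτ hxy hyz hzx.symm, hτ.apply_eq hyz rfl] at hrxz
  exact hr.trans (hr.symm hrxy) hrxz

lemma forall_rel_of_adj_of_rel (hG : G.IsTree) (hκ : IsProperEdgeColoring G k κ)
    (hpres : PresentsToggleGroup G k κ) (hr : Equivalence r)
    (hinv : ∀ g ∈ coloringGroup G k κ, ∀ x y, r x y → r (g x) (g y)) {x y : V}
    (hxy : G.Adj x y) (hrxy : r x y) (v w : V) : r v w := by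
  have hc := hG.connected
  have hstep : ∀ {u v w}, G.Adj u v → r u v → G.Adj v w → r v w := by
    intro u v w huv hruv hvw
    by_cases hwu : w = u
    · exact hwu ▸ hr.symm hruv
    · exact rel_of_rel_of_adj_of_adj hG hκ hpres hr hinv huv hruv hvw hwu
  have hedge : ∀ v, ∀ w, G.Adj v w → r v w :=
    hc.forall_of_forall_adj (fun u v huv hu w hvw => hstep huv (hu v huv) hvw)
      (fun _ hyz => hstep hxy hrxy hyz)
  exact hc.forall_of_forall_adj (fun u v huv hu => hr.trans hu (hedge u v huv)) (hr.refl v) w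

lemma exists_shift_of_rel (hG : G.IsTree) (hκ : IsProperEdgeColoring G k κ)
    (hinv : ∀ g ∈ coloringGroup G k κ, ∀ x y, r x y → r (g x) (g y)) {d : ℕ} (hd : 2 ≤ d)
    (hmin : ∀ x y, x ≠ y → r x y → d ≤ G.dist x y) {u v : V} (huv : r u v)
    (hdist : G.dist u v = d) :
    ∃ b v', G.Adj u b ∧ G.Adj v v' ∧ r b v' ∧ G.dist b v + 1 = d ∧ G.dist b v' = d := by
  have hc := hG.connected
  have hne : u ≠ v := by
    rintro rfl
    rw [dist_self] at hdist
    omega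
  obtain ⟨b, hub, hb⟩ := hc.exists_adj_dist_add_one_eq hne.symm
  rw [SimpleGraph.dist_comm, SimpleGraph.dist_comm (u := v)] at hb
  obtain ⟨τ, hτG, hτ⟩ := exists_isToggle_mem_coloringGroup hκ hub
  have hτu : τ u = b := hτ.apply_eq hub rfl
  have hr' : r b (τ v) := hτu ▸ hinv τ hτG u v huv
  have hbτv : b ≠ τ v := hτu ▸ τ.injective.ne hne
  have hτv : τ v ≠ v := fun h => by
    have := hmin b (τ v) hbτv hr'
    rw [h] at this
    omega
  have hvv' := (hτ.adj_apply hτv).1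
  have htri : G.dist b (τ v) ≤ G.dist b v + G.dist v (τ v) := hc.dist_triangle
  rw [dist_eq_one_iff_adj.mpr hvv'] at htri
  exact ⟨b, τ v, hub, hvv', hr', by omega, le_antisymm (by omega) (hmin _ _ hbτv hr')⟩

lemma not_rel_of_dist_eq [Finite V] (hG : G.IsTree) (hκ : IsProperEdgeColoring G k κ)
    (hinv : ∀ g ∈ coloringGroup G k κ, ∀ x y, r x y → r (g x) (g y)) {d : ℕ} (hd : 2 ≤ d)
    (hmin : ∀ x y, x ≠ y → r x y → d ≤ G.dist x y) {u₀ v₀ : V} (hd₀ : G.dist u₀ v₀ = d) :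
    ¬ r u₀ v₀ := by
  intro hr₀
  have hc := hG.connected
  let S := {p : V × V | r p.1 p.2 ∧ G.dist p.1 p.2 = d ∧ G.dist u₀ p.1 + d = G.dist u₀ p.2}
  obtain ⟨⟨u, v⟩, hS, hmax⟩ := S.exists_max_image (fun p => G.dist u₀ p.2)
    S.toFinite ⟨(u₀, v₀), hr₀, hd₀, by simp [hd₀]⟩
  obtain ⟨huv, hdist, hpos⟩ : r u v ∧ G.dist u v = d ∧ G.dist u₀ u + d = G.dist u₀ v := hS
  obtain ⟨b, v', hub, hvv', hr', hbv, hbv'⟩ := exists_shift_of_rel hG hκ hinv hd hmin huv hdist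
  have hb₁ : G.dist u₀ b ≤ G.dist u₀ u + G.dist u b := hc.dist_triangle
  have hb₂ : G.dist u₀ v ≤ G.dist u₀ b + G.dist b v := hc.dist_triangle
  rw [dist_eq_one_iff_adj.mpr hub] at hb₁
  have hbv₀ : b ≠ v := by
    rintro rfl
    rw [dist_self] at hbv
    omega
  have hv' := hG.dist_eq_dist_add_one_of_dist_add_dist_eq (o := u₀) hbv₀ (by omega) hvv' (by omega)
  have : G.dist u₀ v' ≤ G.dist u₀ v :=
    hmax (b, v') ⟨hr', hbv', show G.dist u₀ b + d = G.dist u₀ v' by omega⟩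
  omega

lemma exists_adj_rel_of_rel [Finite V] (hG : G.IsTree) (hκ : IsProperEdgeColoring G k κ)
    (hinv : ∀ g ∈ coloringGroup G k κ, ∀ x y, r x y → r (g x) (g y)) {u v : V} (hne : u ≠ v)
    (huv : r u v) : ∃ x y, G.Adj x y ∧ r x y := by
  have hex : ∃ n, ∃ x y, x ≠ y ∧ r x y ∧ G.dist x y = n := ⟨_, u, v, hne, huv, rfl⟩
  obtain ⟨d, ⟨u₀, v₀, hne₀, hr₀, hd₀⟩, hmin⟩ : ∃ d, (∃ x y, x ≠ y ∧ r x y ∧ G.dist x y = d) ∧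
      ∀ x y, x ≠ y → r x y → d ≤ G.dist x y :=
    ⟨Nat.find hex, Nat.find_spec hex, fun x y hxy hr => Nat.find_min' hex ⟨x, y, hxy, hr, rfl⟩⟩
  have hd0 : d ≠ 0 := fun h => hne₀ (hG.connected.dist_eq_zero_iff.mp (hd₀.trans h))
  by_cases hd1 : d = 1
  · exact ⟨u₀, v₀, dist_eq_one_iff_adj.mp (hd₀.trans hd1), hr₀⟩
  · exact absurd hr₀ (not_rel_of_dist_eq hG hκ hinv (by omega) hmin hd₀)

end InvariantRelation

theorem stmt_14_general {V : Type*} [Fintype V] (G : SimpleGraph V) (hG : G.IsTree)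
    (k : ℕ) (κ : Sym2 V → ℕ) (hκ : IsProperEdgeColoring G k κ)
    (hpres : PresentsToggleGroup G k κ) :
    ¬ Imprimitive (coloringGroup G k κ) := by
  rintro ⟨r, hr, hinv, x, hx1, hx2⟩
  obtain ⟨y, z, hy, hz, hyz⟩ := (Set.one_lt_ncard_iff (Set.toFinite _)).mp hx1
  obtain ⟨u, v, huv, hruv⟩ := exists_adj_rel_of_rel hG hκ hinv hyz (hr.trans (hr.symm hy) hz)
  have huniv : {y | r x y} = Set.univ :=
    Set.eq_univ_of_forall (forall_rel_of_adj_of_rel hG hκ hpres hr hinv huv hruv x)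
  rw [huniv, Set.ncard_univ, Nat.card_eq_fintype_card] at hx2
  exact lt_irrefl _ hx2

/-- If a proper edge coloring of a tree with at least 3 vertices
presents a generalized toggle group, then the coloring group `𝔊_κ` is primitive. -/
theorem stmt_14 {V : Type*} [Fintype V] (G : SimpleGraph V) (hG : G.IsTree)
    (hn : 3 ≤ Fintype.card V)
    (k : ℕ) (κ : Sym2 V → ℕ) (hκ : IsProperEdgeColoring G k κ)
    (hpres : PresentsToggleGroup G k κ) :
    ¬ Imprimitive (coloringGroup G k κ) :=
  stmt_14_general G hG k κ hκ hpres
end
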